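/- Let A be a ring possessing the right triple factorization property (TF)_right and let m ≥ 1. Then the polynomial algebra A[x_1, …, x_m] in m (commuting) indeterminates over A, realized as the monoid algebra of A over the free commutative monoid on m generators (Mathlib's AddMonoidAlgebra A (Fin m →₀ ℕ)), also possesses the right triple factorization property (TF)_right. -/

import Mathlib

/-- A ring `A` has the right triple factorization property `(TF)_right` if for every
finite collection `a 1, …, a k` of elements of `A` there exist elements
`b 1, …, b k, c, d` of `A` such that `a i = b i * c * d` for all `i` and the left
annihilators in `A` of `c` and of `c * d` coincide. -/
def TFright (A : Type*) [Ring A] : Prop :=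
  ∀ (k : ℕ) (a : Fin k → A), ∃ (b : Fin k → A) (c d : A),
    (∀ i, a i = b i * c * d) ∧ ∀ y : A, y * (c * d) = 0 ↔ y * c = 0

/-! Factor all coefficients of all the polynomials at once, `(a i).coeff μ = b (i, μ) * c * d`,
and use the constants `c` and `d` as the middle factors: the left annihilator of a constant
polynomial is computed coefficientwise. -/

theorem TFright.exists_factorization {A : Type*} [Ring A] (hA : TFright A)
    {ι : Type*} [Fintype ι] (a : ι → A) : ∃ (b : ι → A) (c d : A),
    (∀ i, a i = b i * c * d) ∧ ∀ y : A, y * (c * d) = 0 ↔ y * c = 0 := by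
  obtain ⟨b, c, d, hfactor, hann⟩ := hA (Fintype.card ι) (a ∘ (Fintype.equivFin ι).symm)
  exact ⟨b ∘ Fintype.equivFin ι, c, d,
    fun i => by simpa using hfactor (Fintype.equivFin ι i), hann⟩

namespace AddMonoidAlgebra

variable {A M : Type*} [Semiring A] [AddZeroClass M]

theorem mul_single_zero_eq_zero_iff (y : AddMonoidAlgebra A M) (c : A) :
    y * single 0 c = 0 ↔ ∀ μ, y.coeff μ * c = 0 := by
  simp only [← coeff_inj, Finsupp.ext_iff, coeff_mul_single_zero, coeff_zero,
    Finsupp.coe_zero, Pi.zero_apply]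

theorem exists_eq_mul_single_zero_of_coeff {f : AddMonoidAlgebra A M} {x : A}
    (h : ∀ μ ∈ f.coeff.support, ∃ b, f.coeff μ = b * x) :
    ∃ g : AddMonoidAlgebra A M, f = g * single 0 x := by
  classical
  choose b hb using h
  refine ⟨ofCoeff (Finsupp.onFinset f.coeff.support
    (fun μ => if hμ : μ ∈ f.coeff.support then b μ hμ else 0)
    fun μ hne => by_contra fun hμ => hne (dif_neg hμ)), ?_⟩
  ext μ
  simp only [coeff_mul_single_zero, Finsupp.onFinset_apply]
  split_ifs with hμ
  · exact hb μ hμ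
  · rw [zero_mul, Finsupp.notMem_support_iff.mp hμ]

end AddMonoidAlgebra

open AddMonoidAlgebra in
theorem TFright.addMonoidAlgebra {A M : Type*} [Ring A] [AddMonoid M] (hA : TFright A) :
    TFright (AddMonoidAlgebra A M) := by
  intro k a
  obtain ⟨b, c, d, hfactor, hann⟩ := hA.exists_factorization
    (ι := (i : Fin k) × (a i).coeff.support) fun p => (a p.1).coeff p.2
  have hcoeff (i : Fin k) : ∀ μ ∈ (a i).coeff.support, ∃ b', (a i).coeff μ = b' * (c * d) :=
    fun μ hμ => ⟨b ⟨i, μ, hμ⟩, by rw [← mul_assoc]; exact hfactor ⟨i, μ, hμ⟩⟩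
  choose g hg using fun i => exists_eq_mul_single_zero_of_coeff (hcoeff i)
  refine ⟨g, single 0 c, single 0 d, fun i => ?_, fun y => ?_⟩
  · rw [mul_assoc, single_mul_single, add_zero, ← hg i]
  · rw [single_mul_single, add_zero, mul_single_zero_eq_zero_iff, mul_single_zero_eq_zero_iff]
    exact forall_congr' fun μ => hann _

theorem polynomialAlgebra_TFright_general {A : Type*} [Ring A] (hA : TFright A)
    (m : ℕ) :
    TFright (AddMonoidAlgebra A (Fin m →₀ ℕ)) :=
  hA.addMonoidAlgebra

/-- If a ring `A` has `(TF)_right`, then so does the polynomial algebra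
`A[x₁, …, xₘ]`, realized as the monoid algebra of `A` over the free commutative
monoid `Fin m →₀ ℕ`. -/
theorem polynomialAlgebra_TFright {A : Type*} [Ring A] (hA : TFright A)
    (m : ℕ) (hm : 1 ≤ m) :
    TFright (AddMonoidAlgebra A (Fin m →₀ ℕ)) :=
  polynomialAlgebra_TFright_general hA m
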